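/- The real roots of degree 0 are exactly the vectors e_i − e_j with i ≠ j: an element x ∈ W·β satisfies deg(x) = 0 if and only if x = e_i − e_j for some indices 1 ≤ i, j ≤ n with i ≠ j. -/

import Mathlib

/-!
The quadratic form `q(x) = Σ xᵢ² + ((2 - k)/k²)(Σ xᵢ)²` is `W`-invariant: coordinate permutations
preserve it, and `s_β` is the `q`-orthogonal reflection in `β` because `r(x) = -(x, β)` and
`q(β) = 2`. `W` also preserves the lattice of integral vectors of integral degree. A real root `x`
of degree `0` is therefore an integral vector with `Σ xᵢ = 0` and `Σ xᵢ² = q(x) = q(β) = 2`, which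
forces `x = eᵢ - eⱼ`. Conversely, `s_β` maps the permuted root `β - e₁ + e_{k+1}` to
`e_{k+1} - e₁`, and since adjacent transpositions generate `Sₙ`, every coordinate permutation lies
in `W` and moves this root to any `eᵢ - eⱼ`.
-/

open Finset

/-- `stdE n m` is the standard basis vector `e_m` (1-based index `m`) of `ℚ^n`. -/
def stdE (n m : ℕ) : Fin n → ℚ := fun j => if (j : ℕ) + 1 = m then 1 else 0

/-- the simple root `α_i = e_{i+1} - e_i` (1-based, for `1 ≤ i ≤ n-1`). -/
def alphaRoot (n i : ℕ) : Fin n → ℚ := stdE n (i + 1) - stdE n i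

/-- the simple root `β = e_1 + ⋯ + e_k`. -/
def betaRoot (n k : ℕ) : Fin n → ℚ := fun j => if (j : ℕ) < k then 1 else 0

/-- the quadratic form `q(x) = Σ x_i² + ((2-k)/k²)(Σ x_i)²`. -/
def qform (n k : ℕ) (x : Fin n → ℚ) : ℚ :=
  (∑ i, (x i) ^ 2) + ((2 - (k : ℚ)) / (k : ℚ) ^ 2) * (∑ i, x i) ^ 2

/-- the inner product obtained as the polarization of `q`. -/
def ip (n k : ℕ) (x y : Fin n → ℚ) : ℚ :=
  (qform n k (x + y) - qform n k x - qform n k y) / 2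

/-- the degree `deg(x) = (x_1 + ⋯ + x_n)/k`. -/
def degv (n k : ℕ) (x : Fin n → ℚ) : ℚ := (∑ i, x i) / (k : ℚ)

/-- `r(x) = x_{k+1} + ⋯ + x_n - 2 deg(x)`. -/
def rco (n k : ℕ) (x : Fin n → ℚ) : ℚ :=
  (∑ i ∈ Finset.univ.filter (fun i : Fin n => k ≤ (i : ℕ)), x i) - 2 * degv n k x

/-- the reflection `s_β : x ↦ x + r(x)·β`. -/
def sBeta (n k : ℕ) (x : Fin n → ℚ) : Fin n → ℚ := x + rco n k x • betaRoot n k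

/-- the map swapping coordinates `a` and `b` (0-based). -/
def sSwap (n : ℕ) (a b : Fin n) (x : Fin n → ℚ) : Fin n → ℚ := x ∘ Equiv.swap a b

/-- The Weyl group: the subgroup of bijections of `ℚ^n` generated by the simple
reflections `s_1, …, s_{n-1}` (as functions: `sSwap` of adjacent coordinates,
0-based) and `s_β` (as a function: `sBeta`). -/
def weyl (n k : ℕ) : Subgroup (Equiv.Perm (Fin n → ℚ)) :=
  Subgroup.closure
    {σ | ⇑σ = sBeta n k ∨ ∃ a b : Fin n, (a : ℕ) + 1 = (b : ℕ) ∧ ⇑σ = sSwap n a b}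

/-- The set of real roots: the orbit `W·β`. -/
def realRoots (n k : ℕ) : Set (Fin n → ℚ) :=
  {x | ∃ σ ∈ weyl n k, σ (betaRoot n k) = x}

/-- `dec x`: the coordinates of `x` rearranged in weakly decreasing order. -/
def dec {n : ℕ} (x : Fin n → ℚ) : Fin n → ℚ := fun i => x (Tuple.sort x i.rev)

section Permutations

variable {α ι R : Type*}

lemma exists_perm_apply_eq_and_apply_eq [DecidableEq α] {a b i j : α} (hab : a ≠ b)
    (hij : i ≠ j) : ∃ π : Equiv.Perm α, π a = i ∧ π b = j := by
  have hb : Equiv.swap a i b ≠ i := by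
    simpa only [Equiv.swap_apply_left] using (Equiv.swap a i).injective.ne hab.symm
  exact ⟨Equiv.swap (Equiv.swap a i b) j * Equiv.swap a i,
    by simp [Equiv.swap_apply_of_ne_of_ne hb.symm hij], by simp⟩

lemma comp_eq_of_mem_closure {β : Type*} {S : Set (Equiv.Perm α)} {f : α → β}
    (hS : ∀ σ ∈ S, f ∘ σ = f) {σ : Equiv.Perm α} (hσ : σ ∈ Subgroup.closure S) :
    f ∘ σ = f := by
  induction hσ using Subgroup.closure_induction with
  | mem τ hτ => exact hS τ hτ
  | one => rfl
  | mul τ ρ _ _ hτ hρ => rw [Equiv.Perm.coe_mul, ← Function.comp_assoc, hτ, hρ]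
  | inv τ _ hτ =>
    calc f ∘ ⇑τ⁻¹ = (f ∘ τ) ∘ ⇑τ⁻¹ := by rw [hτ]
      _ = f := by ext; simp

lemma Function.Involutive.comp_eq_of_imp {s : α → α} (hs : Function.Involutive s)
    {p : α → Prop} (h : ∀ x, p x → p (s x)) : p ∘ s = p :=
  funext fun x => propext ⟨fun hx => hs x ▸ h _ hx, h x⟩

variable (ι R) in
def coordPerm : Equiv.Perm ι →* Equiv.Perm (ι → R) where
  toFun π := π.arrowCongr (Equiv.refl R)
  map_one' := rfl
  map_mul' _ _ := rfl

lemma coordPerm_apply (π : Equiv.Perm ι) (x : ι → R) : coordPerm ι R π x = x ∘ π.symm := rfl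

lemma coordPerm_single [DecidableEq ι] [Zero R] (π : Equiv.Perm ι) (i : ι) (c : R) :
    coordPerm ι R π (Pi.single i c) = Pi.single (π i) c := by
  rw [coordPerm_apply, Pi.single_comp_equiv, Equiv.symm_symm]

end Permutations

lemma Int.exists_eq_single_sub_single {ι : Type*} [Fintype ι] [DecidableEq ι] (y : ι → ℤ)
    (hsum : ∑ i, y i = 0) (hsq : ∑ i, y i ^ 2 = 2) :
    ∃ i j, i ≠ j ∧ y = Pi.single i 1 - Pi.single j 1 := by
  have hvals (t : ι) : y t = -1 ∨ y t = 0 ∨ y t = 1 := by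
    have : y t ^ 2 ≤ 2 := hsq ▸ Finset.single_le_sum (fun i _ => sq_nonneg (y i)) (mem_univ t)
    have : -1 ≤ y t ∧ y t ≤ 1 := by constructor <;> nlinarith
    omega
  have hlin (t : ι) : y t = (if y t = 1 then 1 else 0) - (if y t = -1 then 1 else 0) := by
    rcases hvals t with h | h | h <;> simp [h]
  have hquad (t : ι) : y t ^ 2 = (if y t = 1 then 1 else 0) + (if y t = -1 then 1 else 0) := by
    rcases hvals t with h | h | h <;> simp [h]
  rw [sum_congr rfl fun t _ => hlin t, sum_sub_distrib, sum_boole, sum_boole] at hsum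
  rw [sum_congr rfl fun t _ => hquad t, sum_add_distrib, sum_boole, sum_boole] at hsq
  obtain ⟨i, hi⟩ := card_eq_one.mp (show #(univ.filter (y · = 1)) = 1 by omega)
  obtain ⟨j, hj⟩ := card_eq_one.mp (show #(univ.filter (y · = -1)) = 1 by omega)
  have hP (t : ι) : y t = 1 ↔ t = i := by simpa using Finset.ext_iff.mp hi t
  have hN (t : ι) : y t = -1 ↔ t = j := by simpa using Finset.ext_iff.mp hj t
  refine ⟨i, j, ne_of_apply_ne y (by simp [(hP i).2 rfl, (hN j).2 rfl]), ?_⟩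
  funext t
  rw [hlin t]
  simp only [hP, hN, Pi.sub_apply, Pi.single_apply]

lemma Rat.exists_eq_single_sub_single {ι : Type*} [Fintype ι] [DecidableEq ι] (x : ι → ℚ)
    (hx : ∀ i, x i ∈ (⊥ : Subring ℚ)) (hsum : ∑ i, x i = 0) (hsq : ∑ i, x i ^ 2 = 2) :
    ∃ i j, i ≠ j ∧ x = Pi.single i 1 - Pi.single j 1 := by
  choose y hy using fun i => Subring.mem_bot.mp (hx i)
  obtain rfl : (fun i => (y i : ℚ)) = x := funext hy
  beta_reduce at hsum hsq
  obtain ⟨i, j, hij, rfl⟩ := Int.exists_eq_single_sub_single y (by exact_mod_cast hsum)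
    (by exact_mod_cast hsq)
  refine ⟨i, j, hij, funext fun t => ?_⟩
  simp only [Pi.sub_apply, Pi.single_apply]
  push_cast
  rfl

section WeylGroup

variable {n k : ℕ}

lemma sum_betaRoot (hkn : k ≤ n) : ∑ i, betaRoot n k i = k := by
  simp [betaRoot, Finset.sum_boole, Fin.card_filter_val_lt, hkn]

lemma ip_eq (x y : Fin n → ℚ) :
    ip n k x y = x ⬝ᵥ y + (2 - k) / k ^ 2 * (∑ i, x i) * ∑ i, y i := by
  simp only [ip, qform, dotProduct, Pi.add_apply, add_sq, sum_add_distrib, mul_assoc, ← mul_sum]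
  ring

lemma ip_self (x : Fin n → ℚ) : ip n k x x = qform n k x := by
  simp only [ip_eq, qform, dotProduct, sq]
  ring

lemma ip_add_smul_left (x y z : Fin n → ℚ) (t : ℚ) :
    ip n k (x + t • y) z = ip n k x z + t * ip n k y z := by
  simp only [ip_eq, add_dotProduct, smul_dotProduct, Pi.add_apply, Pi.smul_apply, smul_eq_mul,
    sum_add_distrib, ← mul_sum]
  ring

lemma qform_add_smul (x y : Fin n → ℚ) (t : ℚ) :
    qform n k (x + t • y) = qform n k x + 2 * t * ip n k x y + t ^ 2 * qform n k y := by
  simp only [qform, ip_eq, dotProduct, Pi.add_apply, Pi.smul_apply, smul_eq_mul, add_sq,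
    sum_add_distrib, mul_pow, mul_assoc, mul_left_comm (x _) t, ← mul_sum]
  ring

lemma qform_betaRoot (hk : 0 < k) (hkn : k ≤ n) : qform n k (betaRoot n k) = 2 := by
  have hsq : ∑ i, betaRoot n k i ^ 2 = k := by
    rw [← sum_betaRoot hkn]
    exact sum_congr rfl fun i _ => by unfold betaRoot; split_ifs <;> norm_num
  rw [qform, hsq, sum_betaRoot hkn]
  field_simp
  ring

/-- `s_β` is the `q`-orthogonal reflection in `β`, as `q(β) = 2`. -/
lemma ip_betaRoot (hk : 0 < k) (hkn : k ≤ n) (x : Fin n → ℚ) :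
    ip n k x (betaRoot n k) = -rco n k x := by
  have hsplit := sum_filter_add_sum_filter_not univ (fun i : Fin n => (i : ℕ) < k) x
  simp only [not_lt] at hsplit
  have hdot : x ⬝ᵥ betaRoot n k = ∑ i ∈ univ.filter (fun i : Fin n => (i : ℕ) < k), x i := by
    simp [dotProduct, betaRoot, sum_filter]
  rw [ip_eq, hdot, sum_betaRoot hkn, rco, degv]
  field_simp
  linear_combination (k : ℚ) * hsplit

lemma rco_sBeta (hk : 0 < k) (hkn : k ≤ n) (x : Fin n → ℚ) :
    rco n k (sBeta n k x) = -rco n k x := by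
  rw [← neg_eq_iff_eq_neg, ← ip_betaRoot hk hkn, sBeta, ip_add_smul_left, ip_betaRoot hk hkn,
    ip_self, qform_betaRoot hk hkn]
  ring

lemma sBeta_involutive (hk : 0 < k) (hkn : k ≤ n) : Function.Involutive (sBeta n k) := by
  intro x
  rw [sBeta, rco_sBeta hk hkn, sBeta, neg_smul, add_neg_cancel_right]

lemma qform_sBeta (hk : 0 < k) (hkn : k ≤ n) (x : Fin n → ℚ) :
    qform n k (sBeta n k x) = qform n k x := by
  rw [sBeta, qform_add_smul, ip_betaRoot hk hkn, qform_betaRoot hk hkn]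
  ring

lemma degv_sBeta (hk : 0 < k) (hkn : k ≤ n) (x : Fin n → ℚ) :
    degv n k (sBeta n k x) = degv n k x + rco n k x := by
  simp only [degv, sBeta, Pi.add_apply, Pi.smul_apply, smul_eq_mul, sum_add_distrib, ← mul_sum,
    sum_betaRoot hkn]
  field_simp

lemma qform_comp_perm (π : Equiv.Perm (Fin n)) (x : Fin n → ℚ) :
    qform n k (x ∘ π) = qform n k x := by
  simp only [qform, Function.comp_apply, Equiv.sum_comp π (fun i => x i ^ 2), Equiv.sum_comp π x]

lemma degv_comp_perm (π : Equiv.Perm (Fin n)) (x : Fin n → ℚ) :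
    degv n k (x ∘ π) = degv n k x := by
  simp only [degv, Function.comp_apply, Equiv.sum_comp π x]

/-- `⊥ : Subring ℚ` is `ℤ`; this is the `ℤ`-span of the simple roots. -/
def rootLattice (n k : ℕ) : Set (Fin n → ℚ) :=
  {x | (∀ i, x i ∈ (⊥ : Subring ℚ)) ∧ degv n k x ∈ (⊥ : Subring ℚ)}

lemma betaRoot_apply_mem_bot (i : Fin n) : betaRoot n k i ∈ (⊥ : Subring ℚ) := by
  unfold betaRoot; split_ifs
  exacts [one_mem _, zero_mem _]

lemma betaRoot_mem_rootLattice (hk : 0 < k) (hkn : k ≤ n) : betaRoot n k ∈ rootLattice n k := by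
  refine ⟨betaRoot_apply_mem_bot, ?_⟩
  rw [degv, sum_betaRoot hkn, div_self (by positivity)]
  exact one_mem _

lemma sBeta_mem_rootLattice (hk : 0 < k) (hkn : k ≤ n) {x : Fin n → ℚ}
    (hx : x ∈ rootLattice n k) : sBeta n k x ∈ rootLattice n k := by
  obtain ⟨hcoord, hdeg⟩ := hx
  have hr : rco n k x ∈ (⊥ : Subring ℚ) :=
    sub_mem (sum_mem fun i _ => hcoord i) (mul_mem (ofNat_mem _ 2) hdeg)
  exact ⟨fun i => add_mem (hcoord i) (mul_mem hr (betaRoot_apply_mem_bot i)),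
    degv_sBeta hk hkn x ▸ add_mem hdeg hr⟩

lemma comp_perm_mem_rootLattice_iff (π : Equiv.Perm (Fin n)) {x : Fin n → ℚ} :
    x ∘ π ∈ rootLattice n k ↔ x ∈ rootLattice n k := by
  simp only [rootLattice, Set.mem_ofPred_eq, degv_comp_perm, Function.comp_apply,
    π.forall_congr_right (q := fun i => x i ∈ (⊥ : Subring ℚ))]

lemma qform_apply_of_mem_weyl (hk : 0 < k) (hkn : k ≤ n) {σ : Equiv.Perm (Fin n → ℚ)}
    (hσ : σ ∈ weyl n k) (x : Fin n → ℚ) : qform n k (σ x) = qform n k x := by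
  refine congrFun (comp_eq_of_mem_closure (f := qform n k) ?_ hσ) x
  rintro τ (hτ | ⟨a, b, -, hτ⟩) <;> rw [hτ]
  exacts [funext (qform_sBeta hk hkn), funext (qform_comp_perm _)]

lemma apply_mem_rootLattice_iff_of_mem_weyl (hk : 0 < k) (hkn : k ≤ n)
    {σ : Equiv.Perm (Fin n → ℚ)} (hσ : σ ∈ weyl n k) (x : Fin n → ℚ) :
    σ x ∈ rootLattice n k ↔ x ∈ rootLattice n k := by
  refine (congrFun (comp_eq_of_mem_closure (f := (· ∈ rootLattice n k)) ?_ hσ) x).to_iff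
  rintro τ (hτ | ⟨a, b, -, hτ⟩) <;> rw [hτ]
  exacts [(sBeta_involutive hk hkn).comp_eq_of_imp fun _ => sBeta_mem_rootLattice hk hkn,
    funext fun _ => propext (comp_perm_mem_rootLattice_iff _)]

lemma coordPerm_mem_weyl (π : Equiv.Perm (Fin n)) : coordPerm (Fin n) ℚ π ∈ weyl n k := by
  obtain _ | m := n
  · rw [Subsingleton.elim π 1, map_one]
    exact one_mem _
  refine (Submonoid.closure_le (S := ((weyl (m + 1) k).comap (coordPerm _ ℚ)).toSubmonoid)).mpr
    ?_ (Equiv.Perm.mclosure_swap_castSucc_succ m ▸ Submonoid.mem_top π)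
  rintro _ ⟨i, rfl⟩
  refine Subgroup.mem_comap.mpr
    (Subgroup.subset_closure (Or.inr ⟨i.castSucc, i.succ, by simp, funext fun x => ?_⟩))
  rw [coordPerm_apply, Equiv.symm_swap]
  rfl

lemma sBeta_betaRoot_comp_swap (hk : 0 < k) (hkn : k < n) :
    sBeta n k (betaRoot n k ∘ Equiv.swap ⟨0, by omega⟩ ⟨k, hkn⟩)
      = Pi.single ⟨k, hkn⟩ 1 - Pi.single ⟨0, by omega⟩ 1 := by
  set y := betaRoot n k ∘ Equiv.swap ⟨0, by omega⟩ ⟨k, hkn⟩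
  have hsum : ∑ i, y i = k := (Equiv.sum_comp _ _).trans (sum_betaRoot hkn.le)
  have htail : ∑ i ∈ univ.filter (fun i : Fin n => k ≤ (i : ℕ)), y i = 1 := by
    rw [sum_congr rfl (g := fun i => if i = ⟨k, hkn⟩ then 1 else 0), sum_ite_eq']
    · simp
    intro i hi
    simp only [mem_filter, mem_univ, true_and] at hi
    simp only [y, Function.comp_apply, betaRoot, Equiv.swap_apply_def, Fin.ext_iff]
    split_ifs <;> simp_all <;> omega
  have hr : rco n k y = -1 := by
    rw [rco, htail, degv, hsum, div_self (by positivity)]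
    norm_num
  funext t
  simp only [sBeta, hr, y, Pi.add_apply, Pi.smul_apply, Function.comp_apply, betaRoot,
    Pi.sub_apply, Pi.single_apply, Equiv.swap_apply_def, Fin.ext_iff]
  split_ifs <;> simp_all

lemma single_sub_single_mem_realRoots (hk : 0 < k) (hkn : k < n) {i j : Fin n} (hij : i ≠ j) :
    Pi.single i 1 - Pi.single j 1 ∈ realRoots n k := by
  obtain ⟨π, hπa, hπb⟩ := exists_perm_apply_eq_and_apply_eq
    (show (⟨k, hkn⟩ : Fin n) ≠ ⟨0, by omega⟩ by simp [Fin.ext_iff]; omega) hij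
  refine ⟨coordPerm _ ℚ π * (sBeta_involutive hk hkn.le).toPerm _ *
    coordPerm _ ℚ (Equiv.swap ⟨0, by omega⟩ ⟨k, hkn⟩),
    mul_mem (mul_mem (coordPerm_mem_weyl π) (Subgroup.subset_closure (Or.inl rfl)))
      (coordPerm_mem_weyl _), ?_⟩
  simp only [Equiv.Perm.mul_apply, Function.Involutive.coe_toPerm, coordPerm_apply, Equiv.symm_swap]
  rw [sBeta_betaRoot_comp_swap hk hkn, Pi.sub_comp, ← coordPerm_apply, ← coordPerm_apply,
    coordPerm_single, coordPerm_single, hπa, hπb]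

lemma degv_single_sub_single (i j : Fin n) : degv n k (Pi.single i 1 - Pi.single j 1) = 0 := by
  simp [degv, sum_sub_distrib]

end WeylGroup

theorem degree_zero_real_roots_general (n k : ℕ) (hk : 1 ≤ k) (hkn : k < n)
    (x : Fin n → ℚ) :
    (x ∈ realRoots n k ∧ degv n k x = 0) ↔
      (∃ i j : Fin n, i ≠ j ∧ x = Pi.single i 1 - Pi.single j 1) := by
  constructor
  · rintro ⟨⟨σ, hσ, rfl⟩, hdeg⟩
    have hk0 : (k : ℚ) ≠ 0 := by positivity
    have hsum : ∑ i, σ (betaRoot n k) i = 0 := by simpa [degv, hk0] using hdeg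
    have hq := qform_apply_of_mem_weyl hk hkn.le hσ (betaRoot n k)
    rw [qform_betaRoot hk hkn.le, qform, hsum] at hq
    obtain ⟨hcoord, -⟩ := (apply_mem_rootLattice_iff_of_mem_weyl hk hkn.le hσ _).mpr
      (betaRoot_mem_rootLattice hk hkn.le)
    exact Rat.exists_eq_single_sub_single _ hcoord hsum (by simpa using hq)
  · rintro ⟨i, j, hij, rfl⟩
    exact ⟨single_sub_single_mem_realRoots hk hkn hij, degv_single_sub_single i j⟩

theorem degree_zero_real_roots (n k : ℕ) (hn : 2 ≤ n) (hk : 1 ≤ k) (hkn : k < n)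
    (x : Fin n → ℚ) :
    (x ∈ realRoots n k ∧ degv n k x = 0) ↔
      (∃ i j : Fin n, i ≠ j ∧ x = Pi.single i 1 - Pi.single j 1) :=
  degree_zero_real_roots_general n k hk hkn x
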